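/- arXiv:0808.2417 — 6 statements merged into one kernel-verified Lean document; each statement's English description precedes it below -/
import Mathlib

section
/- A nonempty regular language L over alphabet Σ is prefix-closed (i.e., every prefix of every word in L is in L) if and only if L is accepted by some nondeterministic finite automaton in which every state is a final state. -/
/-!
If every state of an NFA is final, a word is accepted exactly when some run on it survives to the
end, and a surviving run on `u ++ v` restricts to one on `u`; so the language is prefix-closed.
Conversely, take a DFA for a prefix-closed `L` and keep only its accepting states. A word survives
in the restricted automaton iff the DFA accepts all its prefixes, which for prefix-closed `L` just
means that the word lies in `L`.
-/

namespace NFA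

variable {α σ : Type*} (M : NFA α σ)

theorem eval_nonempty_of_append {u v : List α} (h : (M.eval (u ++ v)).Nonempty) :
    (M.eval u).Nonempty := by
  obtain ⟨s, hs⟩ := h
  rw [eval, evalFrom_append, mem_evalFrom_iff_exists] at hs
  obtain ⟨t, ht, -⟩ := hs
  exact ⟨t, ht⟩

theorem mem_accepts_iff_eval_nonempty (hM : M.accept = Set.univ) {x : List α} :
    x ∈ M.accepts ↔ (M.eval x).Nonempty := by
  simp only [accepts, hM, Set.mem_univ, true_and]
  rfl

theorem accepts_prefix_closed (hM : M.accept = Set.univ) :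
    ∀ w ∈ M.accepts, ∀ u, u <+: w → u ∈ M.accepts := by
  rintro w hw u ⟨v, rfl⟩
  rw [M.mem_accepts_iff_eval_nonempty hM] at hw ⊢
  exact M.eval_nonempty_of_append hw

end NFA

namespace DFA

variable {α σ : Type*} (M : DFA α σ)

def restrictToAccept : NFA α {q // q ∈ M.accept} where
  step s a := {t | t.val = M.step s a}
  start := {t | t.val = M.start}
  accept := Set.univ

theorem mem_eval_restrictToAccept {x : List α} {s : {q // q ∈ M.accept}} :
    s ∈ M.restrictToAccept.eval x ↔ s.val = M.eval x ∧ ∀ u, u <+: x → u ∈ M.accepts := by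
  induction x using List.reverseRecOn generalizing s with
  | nil =>
    simp only [NFA.eval_nil, List.prefix_nil, forall_eq, mem_accepts, eval_nil]
    exact ⟨fun hs => ⟨hs, hs ▸ s.prop⟩, And.left⟩
  | append_singleton x a ih =>
    simp only [NFA.eval_append_singleton, NFA.mem_stepSet, ih, eval_append_singleton,
      List.prefix_concat_iff, forall_eq_or_imp]
    constructor
    · rintro ⟨t, ⟨ht, hx⟩, hst : s.val = M.step t a⟩
      rw [ht] at hst
      exact ⟨hst, by rw [mem_accepts, eval_append_singleton, ← hst]; exact s.prop, hx⟩
    · rintro ⟨hs, -, hx⟩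
      exact ⟨⟨M.eval x, hx x (List.prefix_refl x)⟩, ⟨rfl, hx⟩, hs⟩

theorem accepts_restrictToAccept :
    M.restrictToAccept.accepts = {x | ∀ u, u <+: x → u ∈ M.accepts} := by
  ext x
  rw [NFA.mem_accepts_iff_eval_nonempty _ rfl]
  constructor
  · rintro ⟨s, hs⟩
    exact ((M.mem_eval_restrictToAccept).1 hs).2
  · intro hx
    exact ⟨⟨M.eval x, hx x (List.prefix_refl x)⟩, (M.mem_eval_restrictToAccept).2 ⟨rfl, hx⟩⟩

end DFA

theorem prefix_closed_iff_nfa_all_final_general {α : Type} (L : Language α)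
    (hreg : L.IsRegular) :
    (∀ w ∈ L, ∀ u, u <+: w → u ∈ L) ↔
      ∃ (σ : Type) (_ : Fintype σ) (M : NFA α σ),
        M.accept = Set.univ ∧ M.accepts = L := by
  constructor
  · intro hL
    obtain ⟨σ, _, M, rfl⟩ := hreg
    refine ⟨_, Fintype.ofFinite _, M.restrictToAccept, rfl, ?_⟩
    rw [M.accepts_restrictToAccept]
    exact Set.ext fun x => ⟨fun hx => hx x (List.prefix_refl x), fun hx u hu => hL x hx u hu⟩
  · rintro ⟨σ, _, M, hM, rfl⟩
    exact M.accepts_prefix_closed hM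

theorem prefix_closed_iff_nfa_all_final {α : Type} (L : Language α)
    (hreg : L.IsRegular) (hne : ∃ w, w ∈ L) :
    (∀ w ∈ L, ∀ u, u <+: w → u ∈ L) ↔
      ∃ (σ : Type) (_ : Fintype σ) (M : NFA α σ),
        M.accept = Set.univ ∧ M.accepts = L :=
  prefix_closed_iff_nfa_all_final_general L hreg
end

section
/- A nonempty regular language L is suffix-closed (i.e., every suffix of every word in L is in L) if and only if L is accepted by some NFA in which every state is an initial state and exactly one state is final. -/
open NFA

private lemma nfa_stepSet_mono {α σ : Type*} (M : NFA α σ) {S T : Set σ} (h : S ⊆ T) (a : α) :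
    M.stepSet S a ⊆ M.stepSet T a := by
  intro s hs
  rw [NFA.mem_stepSet] at hs ⊢
  obtain ⟨t, ht, hst⟩ := hs
  exact ⟨t, h ht, hst⟩

private lemma nfa_evalFrom_mono {α σ : Type*} (M : NFA α σ) (w : List α) :
    ∀ {S T : Set σ}, S ⊆ T → M.evalFrom S w ⊆ M.evalFrom T w := by
  induction w with
  | nil => intro S T h; simpa using h
  | cons a w ih =>
    intro S T h
    show M.evalFrom (M.stepSet S a) w ⊆ M.evalFrom (M.stepSet T a) w
    exact ih (nfa_stepSet_mono M h a)

private lemma nfa_evalFrom_append {α σ : Type*} (M : NFA α σ) (S : Set σ) (x y : List α) :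
    M.evalFrom S (x ++ y) = M.evalFrom (M.evalFrom S x) y := by
  simp [NFA.evalFrom, List.foldl_append]

theorem suffix_closed_iff_nfa_all_initial_one_final {α : Type} (L : Language α)
    (hreg : L.IsRegular) (hne : ∃ w, w ∈ L) :
    (∀ w ∈ L, ∀ u, u <:+ w → u ∈ L) ↔
      ∃ (σ : Type) (_ : Fintype σ) (M : NFA α σ),
        M.start = Set.univ ∧ (∃ f : σ, M.accept = {f}) ∧ M.accepts = L := by
  constructor
  · intro hsc
    obtain ⟨σ, hfin, A, hA⟩ := hreg
    set R : σ → Prop := fun q => ∃ v, A.evalFrom A.start v = q with hR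
    have hRstep : ∀ q a, R q → R (A.step q a) := by
      rintro q a ⟨v, hv⟩
      exact ⟨v ++ [a], by rw [DFA.evalFrom_append_singleton, hv]⟩
    set N : NFA α (σ ⊕ Unit) :=
      { step := fun s a =>
          match s with
          | Sum.inr _ => ∅
          | Sum.inl q => {s' | R q ∧ (s' = Sum.inl (A.step q a) ∨
              (s' = Sum.inr () ∧ A.step q a ∈ A.accept))}
        start := Set.univ
        accept := {Sum.inr ()} } with hN
    have hstep_inr : ∀ (a : α) (s' : σ ⊕ Unit), s' ∉ N.step (Sum.inr ()) a := by
      intro a s' h; exact h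
    have hstep_inl : ∀ (q : σ) (a : α) (s' : σ ⊕ Unit),
        s' ∈ N.step (Sum.inl q) a ↔ R q ∧ (s' = Sum.inl (A.step q a) ∨
          (s' = Sum.inr () ∧ A.step q a ∈ A.accept)) := by
      intro q a s'; rfl
    have hstepSet : ∀ (S : Set (σ ⊕ Unit)) (a : α) (s' : σ ⊕ Unit),
        s' ∈ N.stepSet S a ↔ ∃ q, Sum.inl q ∈ S ∧ R q ∧ (s' = Sum.inl (A.step q a) ∨
          (s' = Sum.inr () ∧ A.step q a ∈ A.accept)) := by
      intro S a s'
      rw [NFA.mem_stepSet]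
      constructor
      · rintro ⟨t, ht, hst⟩
        match t with
        | Sum.inr () => exact absurd hst (hstep_inr a s')
        | Sum.inl q =>
          rw [hstep_inl] at hst
          exact ⟨q, ht, hst⟩
      · rintro ⟨q, hq, hst⟩
        exact ⟨Sum.inl q, hq, (hstep_inl q a s').2 hst⟩
    -- key lemma
    have key : ∀ (w : List α), w ≠ [] → ∀ S : Set (σ ⊕ Unit),
        (Sum.inr () ∈ N.evalFrom S w ↔
          ∃ q, Sum.inl q ∈ S ∧ R q ∧ A.evalFrom q w ∈ A.accept) := by
      intro w
      induction w with
      | nil => intro h; exact absurd rfl h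
      | cons a w ih =>
        intro _ S
        show Sum.inr () ∈ N.evalFrom (N.stepSet S a) w ↔ _
        rcases eq_or_ne w [] with rfl | hw
        · rw [NFA.evalFrom_nil, hstepSet]
          constructor
          · rintro ⟨q, hq, hRq, h | h⟩
            · exact absurd h.symm (by simp)
            · exact ⟨q, hq, hRq, by simpa [DFA.evalFrom] using h.2⟩
          · rintro ⟨q, hq, hRq, hacc⟩
            exact ⟨q, hq, hRq, Or.inr ⟨rfl, by simpa [DFA.evalFrom] using hacc⟩⟩
        · rw [ih hw]
          constructor
          · rintro ⟨p, hp, hRp, hacc⟩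
            rw [hstepSet] at hp
            obtain ⟨q, hq, hRq, h | h⟩ := hp
            · obtain ⟨rfl⟩ : Sum.inl p = Sum.inl (A.step q a) := h
              refine ⟨q, hq, hRq, ?_⟩
              simpa [DFA.evalFrom] using hacc
            · exact absurd h.1 (by simp)
          · rintro ⟨q, hq, hRq, hacc⟩
            refine ⟨A.step q a, ?_, hRstep q a hRq, by simpa [DFA.evalFrom] using hacc⟩
            rw [hstepSet]
            exact ⟨q, hq, hRq, Or.inl rfl⟩
    refine ⟨σ ⊕ Unit, inferInstance, N, rfl, ⟨Sum.inr (), rfl⟩, ?_⟩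
    ext w
    rw [NFA.mem_accepts]
    have haccept : N.accept = {Sum.inr ()} := rfl
    have hstart : N.start = Set.univ := rfl
    simp only [haccept, Set.mem_singleton_iff, exists_eq_left, hstart]
    rcases eq_or_ne w [] with rfl | hw
    · simp only [NFA.evalFrom_nil, Set.mem_univ, true_iff]
      obtain ⟨v, hv⟩ := hne
      exact hsc v hv [] List.nil_suffix
    · rw [key w hw]
      constructor
      · rintro ⟨q, -, ⟨v, hv⟩, hacc⟩
        have : v ++ w ∈ A.accepts := by
          rw [DFA.mem_accepts]
          show A.evalFrom A.start (v ++ w) ∈ A.accept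
          rw [DFA.evalFrom_of_append, hv]
          exact hacc
        rw [hA] at this
        exact hsc _ this w ⟨v, rfl⟩
      · intro hL
        rw [← hA, DFA.mem_accepts] at hL
        exact ⟨A.start, Set.mem_univ _, ⟨[], rfl⟩, hL⟩
  · rintro ⟨σ, hfin, M, hstart, ⟨f, hf⟩, hacc⟩
    intro w hw u hu
    obtain ⟨v, rfl⟩ := hu
    rw [← hacc] at hw ⊢
    rw [NFA.mem_accepts] at hw ⊢
    obtain ⟨s, hs, hsev⟩ := hw
    refine ⟨s, hs, ?_⟩
    rw [nfa_evalFrom_append] at hsev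
    exact nfa_evalFrom_mono M u (by rw [hstart]; exact Set.subset_univ _) hsev
end

section
/- Let M be an NFA over Σ with single initial state q₀ in which all states are reachable from q₀. Let M' be obtained by adding a new symbol # with transitions on # from each final state of M to q₀, and then making all states of M' both initial and final. Then L(M) = Σ* if and only if L(M') = (Σ ∪ {#})*. -/
/-!
If `M` is universal, then after reading any word `x` over `Σ ∪ {#}` the automaton `M'`, started
in `q₀`, is at least in the states that `M` reaches on the `#`-free suffix of `x`: a `#` can always
be read because `M` accepts the block just completed, and it resets to `q₀`. Conversely, if `M'`
is universal it accepts `# w #` for every `w ∈ Σ*`; the first `#` forces a run from `q₀`, the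
letters of `w` are read as in `M`, and the last `#` can only leave a final state of `M`.
-/

namespace NFA

variable {α σ : Type*}

theorem stepSet_mono (M : NFA α σ) {S T : Set σ} (h : S ⊆ T) (a : α) :
    M.stepSet S a ⊆ M.stepSet T a := by
  rw [← Set.union_eq_self_of_subset_left h, stepSet_union]
  exact Set.subset_union_left

theorem evalFrom_mono (M : NFA α σ) {S T : Set σ} (h : S ⊆ T) (x : List α) :
    M.evalFrom S x ⊆ M.evalFrom T x := by
  rw [← Set.union_eq_self_of_subset_left h, evalFrom_union]
  exact Set.subset_union_left

end NFA

namespace ResetConstruction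

variable {α σ : Type*} {M : NFA α σ} {M' : NFA (Option α) σ} {q₀ : σ}

theorem stepSet_some (hstep : ∀ q a, M'.step q (some a) = M.step q a) (S : Set σ) (a : α) :
    M'.stepSet S (some a) = M.stepSet S a := by
  simp only [NFA.stepSet, hstep]

theorem evalFrom_map_some (hstep : ∀ q a, M'.step q (some a) = M.step q a) (S : Set σ)
    (w : List α) :
    M'.evalFrom S (w.map some) = M.evalFrom S w := by
  induction w generalizing S with
  | nil => rfl
  | cons a w ih => simp only [List.map_cons, NFA.evalFrom_cons, stepSet_some hstep, ih]

open Classical in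
theorem mem_stepSet_none
    (hsharp : ∀ q, M'.step q none = (if q ∈ M.accept then {q₀} else ∅ : Set σ))
    {S : Set σ} {q : σ} : q ∈ M'.stepSet S none ↔ q = q₀ ∧ ∃ p ∈ S, p ∈ M.accept := by
  simp only [NFA.mem_stepSet, hsharp]
  constructor
  · rintro ⟨p, hp, hq⟩
    split_ifs at hq with hacc
    · exact ⟨hq, p, hp, hacc⟩
    · exact hq.elim
  · rintro ⟨rfl, p, hp, hacc⟩
    exact ⟨p, hp, by simp [hacc]⟩

open Classical in
theorem exists_evalFrom_subset_evalFrom (hstep : ∀ q a, M'.step q (some a) = M.step q a)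
    (hsharp : ∀ q, M'.step q none = (if q ∈ M.accept then {q₀} else ∅ : Set σ))
    (hM : M.acceptsFrom {q₀} = ⊤) (x : List (Option α)) :
    ∃ u : List α, M.evalFrom {q₀} u ⊆ M'.evalFrom {q₀} x := by
  induction x using List.reverseRecOn with
  | nil => exact ⟨[], subset_rfl⟩
  | append_singleton x a ih =>
    obtain ⟨u, hu⟩ := ih
    cases a with
    | some b =>
      refine ⟨u ++ [b], ?_⟩
      simp only [NFA.evalFrom_append, NFA.evalFrom_singleton, stepSet_some hstep]
      exact M.stepSet_mono hu b
    | none =>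
      refine ⟨[], ?_⟩
      obtain ⟨p, hacc, hp⟩ := NFA.mem_acceptsFrom.1 (hM ▸ trivial : u ∈ M.acceptsFrom {q₀})
      simp only [NFA.evalFrom_nil, NFA.evalFrom_append, NFA.evalFrom_singleton,
        Set.singleton_subset_iff]
      exact (mem_stepSet_none hsharp).2 ⟨rfl, p, hu hp, hacc⟩

open Classical in
theorem acceptsFrom_univ_eq_top (hstep : ∀ q a, M'.step q (some a) = M.step q a)
    (hsharp : ∀ q, M'.step q none = (if q ∈ M.accept then {q₀} else ∅ : Set σ))
    (hacc' : M'.accept = Set.univ) (hM : M.acceptsFrom {q₀} = ⊤) :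
    M'.acceptsFrom Set.univ = ⊤ := by
  refine eq_top_iff.2 fun x _ => ?_
  obtain ⟨u, hu⟩ := exists_evalFrom_subset_evalFrom hstep hsharp hM x
  obtain ⟨p, -, hp⟩ := NFA.mem_acceptsFrom.1 (hM ▸ trivial : u ∈ M.acceptsFrom {q₀})
  exact ⟨p, hacc' ▸ trivial, M'.evalFrom_mono (Set.subset_univ _) x (hu hp)⟩

open Classical in
theorem acceptsFrom_singleton_eq_top (hstep : ∀ q a, M'.step q (some a) = M.step q a)
    (hsharp : ∀ q, M'.step q none = (if q ∈ M.accept then {q₀} else ∅ : Set σ))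
    (hM' : M'.acceptsFrom Set.univ = ⊤) :
    M.acceptsFrom {q₀} = ⊤ := by
  refine eq_top_iff.2 fun w _ => ?_
  have hreset : M'.stepSet Set.univ none ⊆ {q₀} := fun q hq => ((mem_stepSet_none hsharp).1 hq).1
  obtain ⟨q, -, hq⟩ := NFA.mem_acceptsFrom.1
    (hM' ▸ trivial : none :: (w.map some ++ [none]) ∈ M'.acceptsFrom Set.univ)
  have hrun : M'.evalFrom Set.univ (none :: (w.map some ++ [none])) ⊆
      M'.stepSet (M.evalFrom {q₀} w) none := by
    rw [NFA.evalFrom_cons, NFA.evalFrom_append, NFA.evalFrom_singleton,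
      ← evalFrom_map_some hstep]
    exact M'.stepSet_mono (M'.evalFrom_mono hreset _) none
  obtain ⟨-, p, hp, hacc⟩ := (mem_stepSet_none hsharp).1 (hrun hq)
  exact NFA.mem_acceptsFrom.2 ⟨p, hacc, hp⟩

end ResetConstruction

open Classical in

theorem asif_construction_universality_general {α σ : Type} (M : NFA α σ) (q₀ : σ)
    (hstart : M.start = {q₀})
    (M' : NFA (Option α) σ)
    (hstep : ∀ q a, M'.step q (some a) = M.step q a)
    (hsharp : ∀ q, M'.step q none = (if q ∈ M.accept then {q₀} else ∅ : Set σ))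
    (hstart' : M'.start = Set.univ) (hacc' : M'.accept = Set.univ) :
    M.accepts = ⊤ ↔ M'.accepts = ⊤ := by
  rw [NFA.accepts_eq_acceptsFrom_start, NFA.accepts_eq_acceptsFrom_start, hstart, hstart']
  exact ⟨ResetConstruction.acceptsFrom_univ_eq_top hstep hsharp hacc',
    ResetConstruction.acceptsFrom_singleton_eq_top hstep hsharp⟩

open Classical in
theorem asif_construction_universality {α σ : Type} (M : NFA α σ) (q₀ : σ)
    (hstart : M.start = {q₀})
    (hreach : ∀ q : σ, ∃ w : List α, q ∈ M.evalFrom {q₀} w)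
    (M' : NFA (Option α) σ)
    (hstep : ∀ q a, M'.step q (some a) = M.step q a)
    (hsharp : ∀ q, M'.step q none = (if q ∈ M.accept then {q₀} else ∅ : Set σ))
    (hstart' : M'.start = Set.univ) (hacc' : M'.accept = Set.univ) :
    M.accepts = ⊤ ↔ M'.accepts = ⊤ :=
  asif_construction_universality_general M q₀ hstart M' hstep hsharp hstart' hacc'
end

section
/- For every n ≥ 3, there exists an NFA over the binary alphabet {0,1} with n states, all of which are final, such that the minimal DFA accepting the same language has exactly 2^n states. Specifically, the NFA M with states {0,...,n-1}, initial state 0, all states final, where δ(i,0) = {i+1} for 0 ≤ i ≤ n-3, δ(n-1,0) = {n-1}, and δ(i,1) = {0, i+1} for 0 ≤ i ≤ n-2 (and δ undefined/empty otherwise), has the property that in the subset construction every subset S ⊆ {0,...,n-1} is reachable from {0}, and distinct subsets are pairwise inequivalent. -/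
/-- The NFA of Theorem `allfinal`: states `{0,…,n-1}`, initial state `0`, all states
final, with `δ(i,0) = {i+1}` for `0 ≤ i ≤ n-3`, `δ(n-1,0) = {n-1}`, and
`δ(i,1) = {0, i+1}` for `0 ≤ i ≤ n-2` (empty otherwise). -/
def allFinalNFA (n : ℕ) : NFA (Fin 2) (Fin n) where
  step i a :=
    if a = 0 then
      if i.val + 3 ≤ n then {j | j.val = i.val + 1}
      else if i.val = n - 1 then {i}
      else ∅
    else
      if i.val + 2 ≤ n then {j | j.val = 0 ∨ j.val = i.val + 1}
      else ∅
  start := {j | j.val = 0}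
  accept := Set.univ

/-!
Reading `0` moves every state `i ≤ n - 3` to `i + 1`, kills `n - 2` and fixes `n - 1`; reading `1`
moves every `i ≤ n - 2` to `i + 1`, adds `0` as long as some such `i` is present, and kills `n - 1`.
As all states are final, a word is accepted from `S` iff the run from `S` never dies. The word
`0^(n-2-i) 1 0^(n-1)` (just `0^(n-1)` for `i = n - 1`) survives from a state `j` only for `j = i`,
so the languages accepted from distinct subsets differ. Conversely every `S` arises in one step from
its shift `shiftDown S` (under `1` if `0 ∈ S`), or from `shiftDown S` with `n - 1` kept (under `0`
if `0 ∉ S`); induction on the largest element, then on the smallest one when `n - 1 ∈ S`, shows that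
every subset is reachable. Myhill–Nerode turns these two facts into the bound `2 ^ n` for any DFA.
-/

namespace NFA

variable {α σ : Type*}

theorem stepSet_mem_range_eval {M : NFA α σ} {S : Set σ} (h : S ∈ Set.range M.eval) (a : α) :
    M.stepSet S a ∈ Set.range M.eval := by
  obtain ⟨w, rfl⟩ := h
  exact ⟨w ++ [a], M.eval_append_singleton w a⟩

theorem leftQuotient_accepts_apply (M : NFA α σ) (x : List α) :
    M.accepts.leftQuotient x = M.acceptsFrom (M.eval x) := by
  ext y
  simp [accepts_eq_acceptsFrom_start, eval]

theorem exists_not_iff_of_acceptsFrom_ne {M : NFA α σ} {S T : Set σ}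
    (h : M.acceptsFrom S ≠ M.acceptsFrom T) :
    ∃ w, ¬((M.evalFrom S w ∩ M.accept).Nonempty ↔ (M.evalFrom T w ∩ M.accept).Nonempty) := by
  contrapose! h
  ext w
  simpa [mem_acceptsFrom, Set.Nonempty, and_comm] using h w

end NFA

theorem DFA.card_le_of_injective_leftQuotient {α ι τ : Type*} [Fintype ι] [Fintype τ]
    (D : DFA α τ) (u : ι → List α) (hu : (D.accepts.leftQuotient ∘ u).Injective) :
    Fintype.card ι ≤ Fintype.card τ := by
  rw [Language.leftQuotient_accepts, Function.comp_assoc] at hu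
  exact Fintype.card_le_of_injective _ hu.of_comp

theorem NFA.card_set_le_card_of_accepts_eq {α σ τ : Type*} [Fintype σ] [Fintype τ]
    {M : NFA α σ} (hreach : Function.Surjective M.eval) (hdist : Function.Injective M.acceptsFrom)
    (D : DFA α τ) (hD : D.accepts = M.accepts) : Fintype.card (Set σ) ≤ Fintype.card τ := by
  refine D.card_le_of_injective_leftQuotient (Function.surjInv hreach) ?_
  have : D.accepts.leftQuotient ∘ Function.surjInv hreach = M.acceptsFrom := by
    ext1 S
    simp [hD, M.leftQuotient_accepts_apply, Function.surjInv_eq hreach]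
  rwa [this]

namespace allFinalNFA

variable {n : ℕ} {S : Set (Fin n)} {x : Fin n}

theorem mem_step_zero {a : Fin n} :
    x ∈ (allFinalNFA n).step a 0 ↔
      (a.val + 3 ≤ n ∧ x.val = a.val + 1) ∨ (a.val + 1 = n ∧ x = a) := by
  simp only [allFinalNFA, if_true]
  split_ifs <;> simp <;> omega

theorem mem_step_one {a : Fin n} :
    x ∈ (allFinalNFA n).step a 1 ↔ a.val + 2 ≤ n ∧ (x.val = 0 ∨ x.val = a.val + 1) := by
  simp only [allFinalNFA, one_ne_zero, if_false]
  split_ifs <;> simp <;> omega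

theorem mem_stepSet_zero :
    x ∈ (allFinalNFA n).stepSet S 0 ↔
      (x.val + 1 = n ∧ x ∈ S) ∨ (x.val + 1 < n ∧ ∃ a ∈ S, a.val + 1 = x.val) := by
  simp only [NFA.mem_stepSet, mem_step_zero]
  constructor
  · rintro ⟨a, ha, ⟨h, hx⟩ | ⟨h, rfl⟩⟩
    · exact Or.inr ⟨by omega, a, ha, hx.symm⟩
    · exact Or.inl ⟨h, ha⟩
  · rintro (⟨hx, hS⟩ | ⟨hx, a, ha, hax⟩)
    · exact ⟨x, hS, Or.inr ⟨hx, rfl⟩⟩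
    · exact ⟨a, ha, Or.inl ⟨by omega, hax.symm⟩⟩

theorem mem_stepSet_one :
    x ∈ (allFinalNFA n).stepSet S 1 ↔
      (x.val = 0 ∧ ∃ a ∈ S, a.val + 1 < n) ∨ ∃ a ∈ S, a.val + 1 = x.val := by
  simp only [NFA.mem_stepSet, mem_step_one]
  constructor
  · rintro ⟨a, ha, h, hx | hx⟩
    · exact Or.inl ⟨hx, a, ha, by omega⟩
    · exact Or.inr ⟨a, ha, hx.symm⟩
  · rintro (⟨hx, a, ha, han⟩ | ⟨a, ha, hax⟩)
    · exact ⟨a, ha, by omega, Or.inl hx⟩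
    · exact ⟨a, ha, by omega, Or.inr hax.symm⟩

theorem mem_evalFrom_replicate_zero (k : ℕ) :
    x ∈ (allFinalNFA n).evalFrom S (List.replicate k 0) ↔
      (x.val + 1 = n ∧ x ∈ S) ∨ (x.val + 1 < n ∧ ∃ a ∈ S, a.val + k = x.val) := by
  induction k generalizing x with
  | zero =>
    simp only [List.replicate_zero, NFA.evalFrom_nil, add_zero, Fin.val_inj, exists_eq_right]
    rcases (show x.val + 1 ≤ n from x.isLt).eq_or_lt with h | h
    · simp [h]
    · simp [h, h.ne]
  | succ k ih =>
    rw [List.replicate_succ', NFA.evalFrom_append, NFA.evalFrom_singleton, mem_stepSet_zero]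
    constructor
    · rintro (⟨hx, hS⟩ | ⟨hx, b, hb, hbx⟩)
      · exact Or.inl ⟨hx, (ih.1 hS).resolve_right (by omega) |>.2⟩
      · obtain ⟨hb, -⟩ | ⟨-, a, ha, hab⟩ := ih.1 hb
        · omega
        · exact Or.inr ⟨hx, a, ha, by omega⟩
    · rintro (⟨hx, hS⟩ | ⟨hx, a, ha, hax⟩)
      · exact Or.inl ⟨hx, ih.2 (Or.inl ⟨hx, hS⟩)⟩
      · exact Or.inr ⟨hx, ⟨a.val + k, by omega⟩, ih.2 (Or.inr ⟨by simp; omega, a, ha, rfl⟩),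
          by simp; omega⟩

theorem evalFrom_replicate_zero_nonempty_iff :
    ((allFinalNFA n).evalFrom S (List.replicate (n - 1) 0)).Nonempty ↔
      ∃ x ∈ S, x.val + 1 = n := by
  simp only [Set.Nonempty, mem_evalFrom_replicate_zero]
  constructor
  · rintro ⟨x, ⟨hx, hS⟩ | ⟨hx, a, -, hax⟩⟩
    · exact ⟨x, hS, hx⟩
    · omega
  · rintro ⟨x, hS, hx⟩
    exact ⟨x, Or.inl ⟨hx, hS⟩⟩

def isolatingWord (n : ℕ) (i : Fin n) : List (Fin 2) :=
  (if i.val + 1 < n then List.replicate (n - 2 - i.val) 0 ++ [1] else []) ++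
    List.replicate (n - 1) 0

theorem evalFrom_isolatingWord_nonempty_iff (i : Fin n) :
    ((allFinalNFA n).evalFrom S (isolatingWord n i)).Nonempty ↔ i ∈ S := by
  rw [isolatingWord, NFA.evalFrom_append, evalFrom_replicate_zero_nonempty_iff]
  split_ifs with hi
  · simp only [NFA.evalFrom_append, NFA.evalFrom_singleton, mem_stepSet_one,
      mem_evalFrom_replicate_zero]
    constructor
    · rintro ⟨x, ⟨hx0, -⟩ | ⟨b, ⟨hb, -⟩ | ⟨-, a, ha, hab⟩, hbx⟩, hx⟩
      · omega
      · omega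
      · obtain rfl : a = i := Fin.ext (by omega)
        exact ha
    · intro hiS
      exact ⟨⟨n - 1, by omega⟩, Or.inr ⟨⟨n - 2, by omega⟩, Or.inr ⟨by simp; omega, i, hiS,
        by simp; omega⟩, by simp; omega⟩, by simp; omega⟩
  · constructor
    · rintro ⟨x, hxS, hx⟩
      obtain rfl : x = i := Fin.ext (by omega)
      exact hxS
    · exact fun hiS => ⟨i, hiS, by omega⟩

theorem mem_acceptsFrom_iff {w : List (Fin 2)} :
    w ∈ (allFinalNFA n).acceptsFrom S ↔ ((allFinalNFA n).evalFrom S w).Nonempty := by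
  simp [NFA.mem_acceptsFrom, allFinalNFA, Set.Nonempty]

theorem acceptsFrom_injective : Function.Injective (allFinalNFA n).acceptsFrom := by
  intro S T h
  ext i
  rw [← evalFrom_isolatingWord_nonempty_iff (S := S),
    ← evalFrom_isolatingWord_nonempty_iff (S := T), ← mem_acceptsFrom_iff, ← mem_acceptsFrom_iff, h]

def shiftDown (S : Set (Fin n)) : Set (Fin n) := {b | ∃ a ∈ S, a.val = b.val + 1}

theorem stepSet_shiftDown_one (h0 : ∃ a ∈ S, a.val = 0) (hS : ∃ a ∈ S, a.val ≠ 0) :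
    (allFinalNFA n).stepSet (shiftDown S) 1 = S := by
  ext x
  rw [mem_stepSet_one]
  constructor
  · rintro (⟨hx, -⟩ | ⟨b, ⟨a, ha, hab⟩, hbx⟩)
    · obtain ⟨a, ha, ha0⟩ := h0
      rwa [show x = a from Fin.ext (by omega)]
    · rwa [show x = a from Fin.ext (by omega)]
  · intro hx
    by_cases hx0 : x.val = 0
    · obtain ⟨a, ha, ha0⟩ := hS
      exact Or.inl ⟨hx0, ⟨a.val - 1, by omega⟩, ⟨a, ha, by simp; omega⟩, by simp; omega⟩
    · exact Or.inr ⟨⟨x.val - 1, by omega⟩, ⟨x, hx, by simp; omega⟩, by simp; omega⟩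

theorem stepSet_shiftDown_union_zero (h0 : ∀ a ∈ S, a.val ≠ 0) :
    (allFinalNFA n).stepSet (shiftDown S ∪ {x ∈ S | x.val + 1 = n}) 0 = S := by
  ext x
  rw [mem_stepSet_zero]
  constructor
  · rintro (⟨hx, ⟨a, -, hax⟩ | ⟨hxS, -⟩⟩ | ⟨hx, b, ⟨a, ha, hab⟩ | ⟨-, hb⟩, hbx⟩)
    · omega
    · exact hxS
    · rwa [show x = a from Fin.ext (by omega)]
    · omega
  · intro hx
    by_cases hxn : x.val + 1 = n
    · exact Or.inl ⟨hxn, Or.inr ⟨hx, hxn⟩⟩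
    · have := h0 x hx
      exact Or.inr ⟨by omega, ⟨x.val - 1, by omega⟩, Or.inl ⟨x, hx, by simp; omega⟩,
        by simp; omega⟩

theorem empty_mem_range_eval : (∅ : Set (Fin n)) ∈ Set.range (allFinalNFA n).eval := by
  refine ⟨List.replicate n 0 ++ [1], Set.eq_empty_of_forall_notMem fun x hx => ?_⟩
  simp only [NFA.eval, NFA.evalFrom_append, NFA.evalFrom_singleton, mem_stepSet_one,
    mem_evalFrom_replicate_zero] at hx
  omega

theorem mem_range_eval_of_zero_mem (h0 : ∃ a ∈ S, a.val = 0)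
    (h : shiftDown S ∈ Set.range (allFinalNFA n).eval) : S ∈ Set.range (allFinalNFA n).eval := by
  by_cases hS : ∃ a ∈ S, a.val ≠ 0
  · rw [← stepSet_shiftDown_one h0 hS]
    exact NFA.stepSet_mem_range_eval h 1
  · push Not at hS
    refine ⟨[], Set.ext fun x => ⟨fun hx => ?_, fun hx => hS x hx⟩⟩
    obtain ⟨a, ha, ha0⟩ := h0
    rwa [show x = a from Fin.ext (hx.trans ha0.symm)]

theorem mem_range_eval_of_forall_add_one_lt (hS : ∀ a ∈ S, a.val + 1 < n) :
    S ∈ Set.range (allFinalNFA n).eval := by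
  suffices ∀ m, ∀ S : Set (Fin n), (∀ a ∈ S, a.val < m ∧ a.val + 1 < n) →
      S ∈ Set.range (allFinalNFA n).eval from this n S fun a ha => ⟨a.isLt, hS a ha⟩
  intro m
  induction m with
  | zero =>
    intro S hS
    rw [Set.eq_empty_of_forall_notMem fun a ha => absurd (hS a ha).1 (Nat.not_lt_zero _)]
    exact empty_mem_range_eval
  | succ m ih =>
    intro S hS
    by_cases h0 : ∃ a ∈ S, a.val = 0
    · refine mem_range_eval_of_zero_mem h0 (ih _ fun b ⟨a, ha, hab⟩ => ?_)
      have := hS a ha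
      omega
    · push Not at h0
      rw [← stepSet_shiftDown_union_zero h0]
      refine NFA.stepSet_mem_range_eval (ih _ ?_) 0
      rintro b (⟨a, ha, hab⟩ | ⟨hb, hbn⟩)
      · have := hS a ha
        omega
      · have := hS b hb
        omega

theorem shiftDown_mem_range_eval (S : Set (Fin n)) :
    shiftDown S ∈ Set.range (allFinalNFA n).eval :=
  mem_range_eval_of_forall_add_one_lt fun b ⟨a, _, hab⟩ => by omega

theorem mem_range_eval_of_last_mem (hlast : ∃ x ∈ S, x.val + 1 = n) :
    S ∈ Set.range (allFinalNFA n).eval := by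
  suffices ∀ m, ∀ S : Set (Fin n), (∃ x ∈ S, x.val + 1 = n) → (∃ a ∈ S, a.val ≤ m) →
      S ∈ Set.range (allFinalNFA n).eval from
    this n S hlast (hlast.imp fun x h => ⟨h.1, x.isLt.le⟩)
  intro m
  induction m with
  | zero =>
    rintro S - ⟨a, ha, ha0⟩
    exact mem_range_eval_of_zero_mem ⟨a, ha, by omega⟩ (shiftDown_mem_range_eval S)
  | succ m ih =>
    rintro S ⟨x, hx, hxn⟩ ⟨a, ha, ham⟩
    by_cases h0 : ∃ a ∈ S, a.val = 0
    · exact mem_range_eval_of_zero_mem h0 (shiftDown_mem_range_eval S)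
    push Not at h0
    have ha0 := h0 a ha
    rw [← stepSet_shiftDown_union_zero h0]
    refine NFA.stepSet_mem_range_eval (ih _ ⟨x, Or.inr ⟨hx, hxn⟩, hxn⟩ ?_) 0
    exact ⟨⟨a.val - 1, by omega⟩, Or.inl ⟨a, ha, by simp; omega⟩, by simp; omega⟩

theorem surjective_eval : Function.Surjective (allFinalNFA n).eval := by
  intro S
  by_cases hlast : ∃ x ∈ S, x.val + 1 = n
  · exact mem_range_eval_of_last_mem hlast
  · push Not at hlast
    exact mem_range_eval_of_forall_add_one_lt fun a ha => by have := hlast a ha; omega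

end allFinalNFA

theorem allFinalNFA_blowup_general (n : ℕ) :
    (∀ S : Set (Fin n), ∃ w : List (Fin 2),
        (allFinalNFA n).evalFrom (allFinalNFA n).start w = S) ∧
    (∀ S T : Set (Fin n), S ≠ T → ∃ w : List (Fin 2),
        ¬ ((((allFinalNFA n).evalFrom S w) ∩ (allFinalNFA n).accept).Nonempty ↔
           (((allFinalNFA n).evalFrom T w) ∩ (allFinalNFA n).accept).Nonempty)) ∧
    (∃ (τ : Type) (_ : Fintype τ) (D : DFA (Fin 2) τ),
        D.accepts = (allFinalNFA n).accepts ∧ Fintype.card τ = 2 ^ n) ∧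
    (∀ (τ : Type) (_ : Fintype τ) (D : DFA (Fin 2) τ),
        D.accepts = (allFinalNFA n).accepts → 2 ^ n ≤ Fintype.card τ) := by
  have hcard : Fintype.card (Set (Fin n)) = 2 ^ n := by simp
  refine ⟨allFinalNFA.surjective_eval,
    fun S T h => NFA.exists_not_iff_of_acceptsFrom_ne (allFinalNFA.acceptsFrom_injective.ne h),
    ⟨_, _, (allFinalNFA n).toDFA, NFA.toDFA_correct, hcard⟩, fun τ _ D hD => ?_⟩
  rw [← hcard]
  exact NFA.card_set_le_card_of_accepts_eq allFinalNFA.surjective_eval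
    allFinalNFA.acceptsFrom_injective D hD

theorem allFinalNFA_blowup (n : ℕ) (hn : 3 ≤ n) :
    (∀ S : Set (Fin n), ∃ w : List (Fin 2),
        (allFinalNFA n).evalFrom (allFinalNFA n).start w = S) ∧
    (∀ S T : Set (Fin n), S ≠ T → ∃ w : List (Fin 2),
        ¬ ((((allFinalNFA n).evalFrom S w) ∩ (allFinalNFA n).accept).Nonempty ↔
           (((allFinalNFA n).evalFrom T w) ∩ (allFinalNFA n).accept).Nonempty)) ∧
    (∃ (τ : Type) (_ : Fintype τ) (D : DFA (Fin 2) τ),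
        D.accepts = (allFinalNFA n).accepts ∧ Fintype.card τ = 2 ^ n) ∧
    (∀ (τ : Type) (_ : Fintype τ) (D : DFA (Fin 2) τ),
        D.accepts = (allFinalNFA n).accepts → 2 ^ n ≤ Fintype.card τ) :=
  allFinalNFA_blowup_general n
end

section
/- If L is accepted by a DFA with n states, then suff(L), the language of all suffixes of words of L, is accepted by a DFA with at most 2^n − 1 states. -/
/-!
The subset construction applied to the NFA that has the same transitions as `D` but starts in
every reachable state accepts `suff(L)`. Since `D` is complete and deterministic, the image of a
nonempty set of states under a letter is nonempty, so only the `2 ^ n - 1` nonempty subsets are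
needed as states.
-/

theorem Fintype.card_finset_nonempty (σ : Type*) [Fintype σ] :
    Fintype.card {S : Finset σ // S.Nonempty} = 2 ^ Fintype.card σ - 1 := by
  classical
  simp_rw [Finset.nonempty_iff_ne_empty]
  rw [Fintype.card_subtype_compl, Fintype.card_subtype_eq, Fintype.card_finset]

namespace DFA

variable {α σ : Type*} (D : DFA α σ)

/-- The subset construction of `D`, viewed as an NFA with start set `S₀`, restricted to
nonempty sets of states. -/
def nonemptySubsets [DecidableEq σ] (S₀ : {S : Finset σ // S.Nonempty}) :
    DFA α {S : Finset σ // S.Nonempty} where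
  step S a := ⟨S.1.image (D.step · a), S.2.image _⟩
  start := S₀
  accept := {S | ∃ q ∈ S.1, q ∈ D.accept}

variable [DecidableEq σ]

theorem nonemptySubsets_evalFrom (S₀ S : {S : Finset σ // S.Nonempty}) (v : List α) :
    ((D.nonemptySubsets S₀).evalFrom S v).1 = S.1.image (D.evalFrom · v) := by
  induction v generalizing S with
  | nil => simp
  | cons a v ih =>
    rw [evalFrom_cons, ih]
    simp only [nonemptySubsets, Finset.image_image]
    rfl

theorem mem_accepts_nonemptySubsets (S₀ : {S : Finset σ // S.Nonempty}) (v : List α) :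
    v ∈ (D.nonemptySubsets S₀).accepts ↔ ∃ q ∈ S₀.1, v ∈ D.acceptsFrom q := by
  change (∃ q ∈ ((D.nonemptySubsets S₀).evalFrom S₀ v).1, q ∈ D.accept) ↔ _
  simp [nonemptySubsets_evalFrom, mem_acceptsFrom]

noncomputable def reachableStates [Finite σ] : {S : Finset σ // S.Nonempty} :=
  ⟨(Set.range D.eval).toFinite.toFinset, ⟨D.start, by simpa using ⟨[], rfl⟩⟩⟩

theorem accepts_nonemptySubsets_reachableStates [Finite σ] :
    (D.nonemptySubsets D.reachableStates).accepts = {v | ∃ u, u ++ v ∈ D.accepts} := by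
  ext v
  change _ ↔ ∃ u, u ++ v ∈ D.accepts
  rw [mem_accepts_nonemptySubsets]
  simp [reachableStates, mem_acceptsFrom, mem_accepts, eval, evalFrom_of_append]

end DFA

theorem suff_state_complexity {α σ : Type} [Fintype σ] (D : DFA α σ) :
    ∃ (τ : Type) (_ : Fintype τ) (D' : DFA α τ),
      D'.accepts = {v : List α | ∃ u, u ++ v ∈ D.accepts} ∧
      Fintype.card τ ≤ 2 ^ Fintype.card σ - 1 := by
  classical
  exact ⟨_, inferInstance, D.nonemptySubsets D.reachableStates,
    D.accepts_nonemptySubsets_reachableStates, (Fintype.card_finset_nonempty σ).le⟩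
end

section
/- If L is accepted by a DFA with n states, then fact(L), the language of all factors of words of L, is accepted by a DFA with at most 2^(n−1) states. -/
theorem fact_state_complexity {α σ : Type} [Fintype σ] (D : DFA α σ) :
    ∃ (τ : Type) (_ : Fintype τ) (D' : DFA α τ),
      D'.accepts = {v : List α | ∃ u w, u ++ v ++ w ∈ D.accepts} ∧
      Fintype.card τ ≤ 2 ^ (Fintype.card σ - 1) := by
  classical
  set Coacc : Set σ := {p | ∃ w, D.evalFrom p w ∈ D.accept} with hC
  by_cases hall : ∀ p : σ, p ∈ Coacc
  · -- every state can reach a final state: fact(L) = Σ*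
    refine ⟨Unit, inferInstance, ⟨fun _ _ => (), (), Set.univ⟩, ?_, Nat.one_le_two_pow⟩
    ext v
    simp only [DFA.mem_accepts, Set.mem_univ, true_iff, Set.mem_setOf_eq]
    obtain ⟨w, hw⟩ := hall (D.eval v)
    exact ⟨[], w, by
      simpa [DFA.mem_accepts, DFA.eval, DFA.evalFrom_of_append] using hw⟩
  · push_neg at hall
    obtain ⟨d, hd⟩ := hall
    refine ⟨Set {p : σ // p ∈ Coacc}, inferInstance,
      ⟨fun S a => {q | ∃ p ∈ S, D.step p.val a = q.val},
       {p | ∃ u, D.eval u = p.val},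
       {S | S.Nonempty}⟩, ?_, ?_⟩
    · set D' : DFA α (Set {p : σ // p ∈ Coacc}) :=
        ⟨fun S a => {q | ∃ p ∈ S, D.step p.val a = q.val},
         {p | ∃ u, D.eval u = p.val},
         {S | S.Nonempty}⟩ with hD'
      have key : ∀ (v : List α) (S : Set {p : σ // p ∈ Coacc}),
          D'.evalFrom S v = {q | ∃ p ∈ S, D.evalFrom p.val v = q.val} := by
        intro v
        induction v with
        | nil => intro S; ext q; simp [DFA.evalFrom_nil]
        | cons a v ih =>
          intro S
          have h1 : D'.evalFrom S (a :: v) = D'.evalFrom (D'.step S a) v := rfl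
          rw [h1, ih]
          ext q
          constructor
          · rintro ⟨p', ⟨p, hpS, hstep⟩, hev⟩
            refine ⟨p, hpS, ?_⟩
            show D.evalFrom (D.step p.val a) v = q.val
            rw [hstep]; exact hev
          · rintro ⟨p, hpS, hev⟩
            have hev' : D.evalFrom (D.step p.val a) v = q.val := hev
            have hco : D.step p.val a ∈ Coacc := by
              obtain ⟨w, hw⟩ := q.property
              exact ⟨v ++ w, by rw [DFA.evalFrom_of_append, hev']; exact hw⟩
            exact ⟨⟨D.step p.val a, hco⟩, ⟨p, hpS, rfl⟩, hev'⟩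
      ext v
      simp only [DFA.mem_accepts, Set.mem_setOf_eq]
      have heval : D'.eval v = {q | ∃ p : {p : σ // p ∈ Coacc}, (∃ u, D.eval u = p.val) ∧
          D.evalFrom p.val v = q.val} := by
        show D'.evalFrom D'.start v = _
        rw [key]
        rfl
      constructor
      · intro h
        have h' : (D'.eval v).Nonempty := h
        rw [heval] at h'
        obtain ⟨q, p, ⟨u, hu⟩, hpv⟩ := h'
        obtain ⟨w, hw⟩ := q.property
        refine ⟨u, w, ?_⟩
        show D.eval (u ++ v ++ w) ∈ D.accept
        rw [show u ++ v ++ w = u ++ (v ++ w) by simp [List.append_assoc]]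
        show D.evalFrom D.start (u ++ (v ++ w)) ∈ D.accept
        rw [DFA.evalFrom_of_append]
        show D.evalFrom (D.eval u) (v ++ w) ∈ D.accept
        rw [hu, DFA.evalFrom_of_append, hpv]
        exact hw
      · rintro ⟨u, w, hw⟩
        have hw' : D.evalFrom (D.evalFrom (D.eval u) v) w ∈ D.accept := by
          have : D.eval (u ++ v ++ w) ∈ D.accept := hw
          rw [show u ++ v ++ w = u ++ (v ++ w) by simp [List.append_assoc]] at this
          have h2 : D.evalFrom D.start (u ++ (v ++ w)) ∈ D.accept := this
          rw [DFA.evalFrom_of_append, DFA.evalFrom_of_append] at h2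
          exact h2
        have hpco : D.eval u ∈ Coacc := ⟨v ++ w, by
          rw [DFA.evalFrom_of_append]; exact hw'⟩
        have hqco : D.evalFrom (D.eval u) v ∈ Coacc := ⟨w, hw'⟩
        show (D'.eval v).Nonempty
        rw [heval]
        exact ⟨⟨_, hqco⟩, ⟨D.eval u, hpco⟩, ⟨u, rfl⟩, rfl⟩
    · have hlt : Fintype.card {p : σ // p ∈ Coacc} < Fintype.card σ :=
        Fintype.card_subtype_lt (x := d) hd
      calc Fintype.card (Set {p : σ // p ∈ Coacc})
          = 2 ^ Fintype.card {p : σ // p ∈ Coacc} := by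
            simp [Fintype.card_set]
        _ ≤ 2 ^ (Fintype.card σ - 1) :=
            Nat.pow_le_pow_right (by norm_num) (Nat.le_sub_one_of_lt hlt)
end
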